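/- Let G be a connected simple graph on a finite nonempty vertex set V, and suppose a word w = u ++ X ++ X ++ v represents G, where X is a word of length at least 2 (so that XX is a non-trivial square) and u, v are possibly empty words. Then every vertex of V occurs in X. -/

import Mathlib

variable {V : Type*} [DecidableEq V]

/-- Distinct letters `x` and `y` alternate in `w`: deleting all other letters
leaves no two equal consecutive letters. -/
def Alternates (x y : V) (w : List V) : Prop :=
  (w.filter fun z => decide (z = x ∨ z = y)).Chain' (· ≠ ·)

/-- `w` represents the graph `G`: every vertex occurs in `w`, and distinct
vertices alternate in `w` iff they are adjacent in `G`. -/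
def Represents (G : SimpleGraph V) (w : List V) : Prop :=
  (∀ v : V, v ∈ w) ∧ ∀ x y : V, x ≠ y → (Alternates x y w ↔ G.Adj x y)

/-- `w` contains a square. -/
def HasSquare (w : List V) : Prop :=
  ∃ u X v : List V, X ≠ [] ∧ w = u ++ X ++ X ++ v

/-- `w` is square-free. -/
def SqFree (w : List V) : Prop := ¬ HasSquare w

/-!
If some vertex is missing from `X`, connectedness yields an edge `xy` with `x ∈ X` and `y ∉ X`.
Restricted to `{x, y}`, the factor `XX` then reads as a nonempty block of `x`'s followed by
another one, so `x` occurs twice in a row and `x`, `y` do not alternate, although they are adjacent.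
-/

theorem SimpleGraph.Reachable.exists_adj_mem_not_mem {α : Type*} {G : SimpleGraph α} {a b : α}
    (h : G.Reachable a b) {S : Set α} (ha : a ∈ S) (hb : b ∉ S) :
    ∃ x y, G.Adj x y ∧ x ∈ S ∧ y ∉ S := by
  obtain ⟨p⟩ := h
  obtain ⟨d, -, hd⟩ := p.exists_boundary_dart S ha hb
  exact ⟨d.fst, d.snd, d.adj, hd⟩

theorem Alternates.infix {x y : V} {w w' : List V} (h : Alternates x y w) (hw : w' <:+: w) :
    Alternates x y w' :=
  List.IsChain.infix h (hw.filter _)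

theorem List.not_isChain_ne_append_self {α : Type*} {L : List α} {a : α} (hne : L ≠ [])
    (hL : ∀ z ∈ L, z = a) : ¬ (L ++ L).IsChain (· ≠ ·) := by
  intro h
  refine (List.isChain_append.mp h).2.2 _ (List.getLast?_eq_some_getLast hne) _
    (List.head?_eq_some_head hne) ?_
  rw [hL _ (List.getLast_mem hne), hL _ (List.head_mem hne)]

theorem not_alternates_append_self {x y : V} {X : List V} (hx : x ∈ X) (hy : y ∉ X) :
    ¬ Alternates x y (X ++ X) := by
  set L := X.filter fun z => decide (z = x ∨ z = y)
  have hL : ∀ z ∈ L, z = x := by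
    intro z hz
    obtain ⟨hzX, hz⟩ := List.mem_filter.mp hz
    rcases of_decide_eq_true hz with rfl | rfl
    · rfl
    · exact absurd hzX hy
  have hxL : x ∈ L := List.mem_filter.mpr ⟨hx, by simp⟩
  intro halt
  refine List.not_isChain_ne_append_self (List.ne_nil_of_mem hxL) hL ?_
  rw [← List.filter_append]
  exact halt

theorem square_contains_all_vertices {V : Type*} [DecidableEq V]
    (G : SimpleGraph V) (hconn : G.Connected)
    (u X v : List V) (hX : 2 ≤ X.length)
    (hrep : Represents G (u ++ X ++ X ++ v)) :
    ∀ x : V, x ∈ X := by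
  intro z
  by_contra hz
  obtain ⟨x₀, hx₀⟩ := List.exists_mem_of_length_pos (by omega : 0 < X.length)
  obtain ⟨x, y, hxy, hx, hy⟩ :=
    (hconn x₀ z).exists_adj_mem_not_mem (S := {z | z ∈ X}) hx₀ hz
  have halt : Alternates x y (u ++ X ++ X ++ v) := (hrep.2 x y hxy.ne).2 hxy
  exact not_alternates_append_self hx hy (halt.infix ⟨u, v, by simp⟩)
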